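/- arXiv:2507.12178 — 2 statements merged into one kernel-verified Lean document; each statement's English description precedes it below -/
import Mathlib

section
/- Let I be a monomial ideal of k[x_1,...,x_n] generated by a regular sequence of monomials x^{A_1},...,x^{A_c}. Then every minimal monomial generator x^B of the integral closure Ī satisfies B ≼ A_1 + A_2 + ... + A_c componentwise; in particular, the LCM of all minimal generators of Ī divides x^{A_1 + ... + A_c}. -/
open MvPolynomial

variable {k : Type} [Field k] {n : ℕ}

/-- An ideal of `k[x₁,…,xₙ]` is a *monomial ideal* if it is generated by monomials. -/
def IsMonomialIdeal (I : Ideal (MvPolynomial (Fin n) k)) : Prop :=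
  ∃ G : Set (Fin n →₀ ℕ), I = Ideal.span ((fun A => (monomial A (1 : k))) '' G)

/-- The integral closure of an ideal `I`, as a set: all elements `f` satisfying an
equation `f^r + a₁ f^{r-1} + ⋯ + a_r = 0` with `aᵢ ∈ Iⁱ`. -/
def intCl (I : Ideal (MvPolynomial (Fin n) k)) : Set (MvPolynomial (Fin n) k) :=
  {f | ∃ r : ℕ, 0 < r ∧ ∃ a : ℕ → MvPolynomial (Fin n) k,
    (∀ i, 1 ≤ i → i ≤ r → a i ∈ I ^ i) ∧
    f ^ r + ∑ i ∈ Finset.Icc 1 r, a i * f ^ (r - i) = 0}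

/-- The exponent vectors of the minimal monomial generators of a set `T` of polynomials:
those `A` with `x^A ∈ T` minimal in the componentwise (divisibility) order. -/
def minExps (T : Set (MvPolynomial (Fin n) k)) : Set (Fin n →₀ ℕ) :=
  {A | monomial A (1 : k) ∈ T ∧
    ∀ B : Fin n →₀ ℕ, monomial B (1 : k) ∈ T → B ≤ A → B = A}

/-! A monomial `x^B` is integral over `I = (x^{A_j})` iff `∑ m_j A_j ≤ r B` for some
`m : ι → ℕ` with `∑ m_j = r > 0`, i.e. iff `B` dominates a rational convex combination of the
`A_j`: one direction reads exponents off an integral equation, the other takes the equation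
`f^r - f^r = 0` with `f^r ∈ I^r`. If `A_j t < B t` for every `j`, lowering `B t` by one keeps
this inequality, so a minimal such `B` has `B t ≤ A_j t ≤ ∑ A_j t` for some `j`. -/

theorem sum_nsmul_le_nsmul_tsub_single {ι σ : Type*} [Fintype ι] {A : ι → σ →₀ ℕ}
    {m : ι → ℕ} {r : ℕ} {B : σ →₀ ℕ} {t : σ} (hm : ∑ j, m j = r)
    (hle : ∑ j, m j • A j ≤ r • B) (ht : ∀ j, A j t < B t) :
    ∑ j, m j • A j ≤ r • (B - Finsupp.single t 1) := by
  intro s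
  by_cases hs : s = t
  · subst hs
    calc (∑ j, m j • A j) s = ∑ j, m j * A j s := by simp [Finsupp.finsetSum_apply]
      _ ≤ ∑ j, m j * (B s - 1) :=
        Finset.sum_le_sum fun j _ => Nat.mul_le_mul_left _ (Nat.le_sub_one_of_lt (ht j))
      _ = (r • (B - Finsupp.single s 1) : σ →₀ ℕ) s := by simp [← Finset.sum_mul, hm]
  · simpa [Finsupp.single_eq_of_ne hs] using hle s

namespace MvPolynomial

variable {σ R ι : Type*} [CommSemiring R]

theorem span_range_monomial_one_eq_span_image (A : ι → σ →₀ ℕ) :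
    Ideal.span (Set.range fun i => monomial (A i) (1 : R)) =
      Ideal.span ((fun s => monomial s (1 : R)) '' Set.range A) := by
  rw [← Set.range_comp]; rfl

variable [Fintype ι]

theorem exists_sum_smul_le_of_mem_support_of_mem_span_pow (A : ι → σ →₀ ℕ) {r : ℕ}
    {f : MvPolynomial σ R}
    (hf : f ∈ Ideal.span (Set.range fun i => monomial (A i) (1 : R)) ^ r)
    {E : σ →₀ ℕ} (hE : E ∈ f.support) :
    ∃ m : ι → ℕ, ∑ j, m j = r ∧ ∑ j, m j • A j ≤ E := by
  classical
  induction r generalizing f E with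
  | zero => exact ⟨0, by simp, by simp⟩
  | succ r ih =>
    rw [pow_succ] at hf
    refine Submodule.mul_induction_on
      (C := fun f => ∀ E ∈ f.support, ∃ m : ι → ℕ, ∑ j, m j = r + 1 ∧ ∑ j, m j • A j ≤ E)
      hf
      (fun a ha b hb E hE => ?_) (fun a b iha ihb E hE => ?_) E hE
    · obtain ⟨E₁, hE₁, E₂, hE₂, rfl⟩ := Finset.mem_add.mp (support_mul a b hE)
      obtain ⟨m, hm, hle⟩ := ih ha hE₁
      rw [span_range_monomial_one_eq_span_image, mem_ideal_span_monomial_image] at hb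
      obtain ⟨_, ⟨j, rfl⟩, hj⟩ := hb E₂ hE₂
      refine ⟨m + Pi.single j 1, ?_, ?_⟩
      · simp [Finset.sum_add_distrib, hm]
      · simpa [add_smul, Finset.sum_add_distrib, Pi.single_apply, ite_smul]
          using add_le_add hle hj
    · rcases Finset.mem_union.mp (support_add hE) with h | h
      exacts [iha E h, ihb E h]

theorem monomial_mem_span_pow_of_sum_smul_le (A : ι → σ →₀ ℕ) {r : ℕ} {m : ι → ℕ}
    (hm : ∑ j, m j = r) {E : σ →₀ ℕ} (hle : ∑ j, m j • A j ≤ E) :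
    monomial E (1 : R) ∈ Ideal.span (Set.range fun i => monomial (A i) (1 : R)) ^ r := by
  have hfactor : monomial E (1 : R) =
      monomial (E - ∑ j, m j • A j) 1 * ∏ j, monomial (A j) (1 : R) ^ m j := by
    simp only [monomial_pow, one_pow, ← monomial_sum_one, monomial_mul, one_mul,
      tsub_add_cancel_of_le hle]
  rw [hfactor, ← hm, ← Finset.prod_pow_eq_pow_sum]
  exact Ideal.mul_mem_left _ _ <| Ideal.prod_mem_prod fun j _ =>
    Ideal.pow_mem_pow (Ideal.subset_span (Set.mem_range_self j)) _

end MvPolynomial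

theorem mem_intCl_of_pow_mem_pow {I : Ideal (MvPolynomial (Fin n) k)}
    {f : MvPolynomial (Fin n) k} {r : ℕ} (hr : 0 < r) (hf : f ^ r ∈ I ^ r) : f ∈ intCl I := by
  refine ⟨r, hr, fun i => if i = r then -f ^ r else 0, fun i _ _ => ?_, ?_⟩
  · dsimp only
    split_ifs with h
    · exact h.symm ▸ neg_mem hf
    · exact zero_mem _
  · rw [Finset.sum_eq_single_of_mem r (Finset.mem_Icc.mpr ⟨hr, le_rfl⟩)
      fun i _ hi => by simp [hi]]
    simp

theorem exists_smul_mem_support_of_monomial_mem_intCl {I : Ideal (MvPolynomial (Fin n) k)}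
    {B : Fin n →₀ ℕ} (hB : monomial B (1 : k) ∈ intCl I) :
    ∃ i, 0 < i ∧ ∃ f ∈ I ^ i, i • B ∈ f.support := by
  obtain ⟨r, hr, a, ha, heq⟩ := hB
  -- compare coefficients of `x^{rB}`: `f^r` contributes `1`, so some `a_i f^{r-i}` does too
  have hcoeff := congrArg (coeff (r • B)) heq
  rw [coeff_add, monomial_pow, one_pow, coeff_monomial, if_pos rfl, coeff_zero,
    coeff_sum] at hcoeff
  obtain ⟨i, hi, hne⟩ := Finset.exists_ne_zero_of_sum_ne_zero (s := Finset.Icc 1 r)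
    (by intro h; rw [h, add_zero] at hcoeff; exact one_ne_zero hcoeff)
  obtain ⟨hi₁, hir⟩ := Finset.mem_Icc.mp hi
  obtain ⟨j, rfl⟩ := Nat.exists_eq_add_of_le hir
  rw [Nat.add_sub_cancel_left, add_smul, monomial_pow, one_pow, coeff_mul_monomial,
    mul_one] at hne
  exact ⟨i, hi₁, a i, ha i hi₁ hir, mem_support_iff.mpr hne⟩

theorem monomial_mem_intCl_span_iff {ι : Type*} [Fintype ι] (A : ι → Fin n →₀ ℕ)
    (B : Fin n →₀ ℕ) :
    monomial B (1 : k) ∈ intCl (Ideal.span (Set.range fun i => monomial (A i) (1 : k))) ↔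
      ∃ r, 0 < r ∧ ∃ m : ι → ℕ, ∑ j, m j = r ∧ ∑ j, m j • A j ≤ r • B := by
  constructor
  · intro hB
    obtain ⟨i, hi, f, hf, hsupp⟩ := exists_smul_mem_support_of_monomial_mem_intCl hB
    exact ⟨i, hi, exists_sum_smul_le_of_mem_support_of_mem_span_pow A hf hsupp⟩
  · rintro ⟨r, hr, m, hm, hle⟩
    refine mem_intCl_of_pow_mem_pow hr ?_
    rw [monomial_pow, one_pow]
    exact monomial_mem_span_pow_of_sum_smul_le A hm hle

theorem exists_apply_le_of_mem_minExps {ι : Type*} [Fintype ι] (A : ι → Fin n →₀ ℕ)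
    {B : Fin n →₀ ℕ}
    (hB : B ∈ minExps (intCl (Ideal.span (Set.range fun i => monomial (A i) (1 : k)))))
    (t : Fin n) : ∃ j, B t ≤ A j t := by
  obtain ⟨hBmem, hmin⟩ := hB
  by_contra! hlt
  obtain ⟨r, hr, m, hm, hle⟩ := (monomial_mem_intCl_span_iff A B).mp hBmem
  have hlower := (monomial_mem_intCl_span_iff (k := k) A (B - Finsupp.single t 1)).mpr
    ⟨r, hr, m, hm, sum_nsmul_le_nsmul_tsub_single hm hle hlt⟩
  have hBt : B t - 1 = B t := by
    simpa using DFunLike.congr_fun (hmin _ hlower tsub_le_self) t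
  obtain ⟨j, -, -⟩ := Finset.exists_ne_zero_of_sum_ne_zero (hm ▸ hr.ne')
  have := hlt j
  omega

theorem intCl_minExps_le_sum_general {c : ℕ} (A : Fin c → (Fin n →₀ ℕ))
    (I : Ideal (MvPolynomial (Fin n) k))
    (hI : I = Ideal.span (Set.range fun i => monomial (A i) (1 : k))) :
    ∀ B ∈ minExps (intCl I), B ≤ ∑ i, A i := by
  rintro B hB t
  subst hI
  obtain ⟨j, hj⟩ := exists_apply_le_of_mem_minExps A hB t
  calc B t ≤ A j t := hj
    _ ≤ (∑ i, A i) t :=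
      Finset.single_le_sum (f := A) (fun _ _ => zero_le) (Finset.mem_univ j) t

/-- If `I` is generated by a regular sequence of monomials
`x^{A 1}, …, x^{A c}` (equivalently, nonconstant pairwise coprime monomials), then every
minimal monomial generator `x^B` of the integral closure satisfies `B ≼ A 1 + ⋯ + A c`
componentwise; in particular the LCM of the minimal generators of `Ī` divides
`x^{A 1 + ⋯ + A c}`. -/
theorem intCl_minExps_le_sum {c : ℕ} (A : Fin c → (Fin n →₀ ℕ))
    (hA0 : ∀ i, A i ≠ 0)
    (hcop : Pairwise fun i j => Disjoint (A i).support (A j).support)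
    (I : Ideal (MvPolynomial (Fin n) k))
    (hI : I = Ideal.span (Set.range fun i => monomial (A i) (1 : k))) :
    ∀ B ∈ minExps (intCl I), B ≤ ∑ i, A i :=
  intCl_minExps_le_sum_general A I hI
end

section
/- Let I be a stable monomial ideal of k[x_1,...,x_n], let x^B be a monomial in the integral closure Ī with m(x^B) = t (the largest index of a variable dividing x^B), and let i < t. Then x_i · x^B / x_t belongs to Ī. -/
open MvPolynomial

variable {k : Type} [Field k] {n : ℕ}

/-- A set `T` of polynomials is *stable* if for every monomial `x^A ∈ T`, letting `t` be the
largest index of a variable dividing `x^A`, we have `x_i · x^A / x_t ∈ T` for all `i < t`. -/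
def IsStableSet (T : Set (MvPolynomial (Fin n) k)) : Prop :=
  ∀ A : Fin n →₀ ℕ, monomial A (1 : k) ∈ T →
    ∀ t : Fin n, A t ≠ 0 → (∀ s, A s ≠ 0 → s ≤ t) →
      ∀ i, i < t →
        monomial (A + Finsupp.single i 1 - Finsupp.single t 1) (1 : k) ∈ T

/-! For a monomial ideal, `x^B ∈ Ī` iff `x^{mB} ∈ Iᵐ` for some `m ≥ 1`. Powers of a stable
monomial ideal are stable: if `x^a x^b` divides `x^A` with `x^a ∈ I`, `x^b ∈ J`, then either `x_t`
divides `x^A / (x^a x^b)`, or one of the factors involves `x_t` and can itself be exchanged.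
Exchanging `m` times in `x^{mB} ∈ Iᵐ` gives `x^{mB'} ∈ Iᵐ` for `B' = B + eᵢ - eₜ`,
so `x^{B'} ∈ Ī`. -/

namespace MvPolynomial

variable {σ R : Type*} [CommSemiring R] {I J : Ideal (MvPolynomial σ R)}

lemma monomial_one_mem_of_le [Nontrivial R] {A B : σ →₀ ℕ} (hA : monomial A (1 : R) ∈ I)
    (hAB : A ≤ B) : monomial B (1 : R) ∈ I :=
  I.mem_of_dvd (monomial_one_dvd_monomial_one.2 hAB) hA

lemma monomial_one_add_mem_mul {a b : σ →₀ ℕ} (ha : monomial a (1 : R) ∈ I)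
    (hb : monomial b (1 : R) ∈ J) : monomial (a + b) (1 : R) ∈ I * J := by
  simpa only [monomial_mul, mul_one] using Ideal.mul_mem_mul ha hb

open scoped Pointwise in
lemma span_monomial_one_image_mul (G H : Set (σ →₀ ℕ)) :
    Ideal.span ((fun A => monomial A (1 : R)) '' G) *
        Ideal.span ((fun A => monomial A (1 : R)) '' H) =
      Ideal.span ((fun A => monomial A (1 : R)) '' (G + H)) := by
  rw [Ideal.span_mul_span']
  congr 1
  ext f
  simp only [Set.mem_mul, Set.mem_image, Set.mem_add]
  constructor
  · rintro ⟨_, ⟨a, ha, rfl⟩, _, ⟨b, hb, rfl⟩, rfl⟩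
    exact ⟨a + b, ⟨a, ha, b, hb, rfl⟩, by rw [monomial_mul, mul_one]⟩
  · rintro ⟨_, ⟨a, ha, b, hb, rfl⟩, rfl⟩
    exact ⟨_, ⟨a, ha, rfl⟩, _, ⟨b, hb, rfl⟩, by rw [monomial_mul, mul_one]⟩

end MvPolynomial

namespace Finsupp

variable {ι : Type*}

lemma le_add_single_tsub_single {C A : ι →₀ ℕ} {t : ι} (hCA : C ≤ A) (ht : C t < A t)
    (i : ι) : C ≤ A + single i 1 - single t 1 :=
  calc C ≤ A - single t 1 := fun s => by
        have := hCA s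
        rcases eq_or_ne s t with rfl | hs
        · simp only [coe_tsub, Pi.sub_apply, single_eq_same]; omega
        · simpa only [coe_tsub, Pi.sub_apply, single_eq_of_ne hs, tsub_zero]
    _ ≤ A + single i 1 - single t 1 := tsub_le_tsub_right le_self_add _

lemma le_of_add_single_apply_ne_zero [Preorder ι] {A : ι →₀ ℕ} {t u : ι}
    (hA : ∀ s, A s ≠ 0 → s ≤ t) (hu : u ≤ t) (c : ℕ) :
    ∀ s, (A + single u c) s ≠ 0 → s ≤ t := fun s hs => by
  rcases eq_or_ne u s with rfl | hus
  · exact hu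
  · exact hA s (by simpa [single_eq_of_ne' hus] using hs)

end Finsupp

open Finsupp

section

variable {I J : Ideal (MvPolynomial (Fin n) k)}

namespace IsMonomialIdeal

lemma top : IsMonomialIdeal (⊤ : Ideal (MvPolynomial (Fin n) k)) :=
  ⟨{0}, by rw [Set.image_singleton, monomial_zero', C_1, Ideal.span_singleton_one]⟩

open scoped Pointwise in
lemma mul (hI : IsMonomialIdeal I) (hJ : IsMonomialIdeal J) : IsMonomialIdeal (I * J) := by
  obtain ⟨G, rfl⟩ := hI
  obtain ⟨H, rfl⟩ := hJ
  exact ⟨G + H, span_monomial_one_image_mul G H⟩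

lemma pow (hI : IsMonomialIdeal I) (m : ℕ) : IsMonomialIdeal (I ^ m) := by
  induction m with
  | zero => rw [pow_zero, Ideal.one_eq_top]; exact top
  | succ m ih => rw [pow_succ]; exact ih.mul hI

lemma monomial_mem_of_mem_support (hI : IsMonomialIdeal I) {p : MvPolynomial (Fin n) k}
    (hp : p ∈ I) {A : Fin n →₀ ℕ} (hA : A ∈ p.support) : monomial A (1 : k) ∈ I := by
  obtain ⟨G, rfl⟩ := hI
  obtain ⟨g, hg, hgA⟩ := mem_ideal_span_monomial_image.1 hp A hA
  exact monomial_one_mem_of_le (Ideal.subset_span ⟨g, hg, rfl⟩) hgA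

lemma exists_add_le_of_monomial_mem_mul (hI : IsMonomialIdeal I) (hJ : IsMonomialIdeal J)
    {A : Fin n →₀ ℕ} (hA : monomial A (1 : k) ∈ I * J) :
    ∃ a b, monomial a (1 : k) ∈ I ∧ monomial b (1 : k) ∈ J ∧ a + b ≤ A := by
  obtain ⟨G, rfl⟩ := hI
  obtain ⟨H, rfl⟩ := hJ
  rw [span_monomial_one_image_mul] at hA
  obtain ⟨_, ⟨a, ha, b, hb, rfl⟩, hle⟩ := mem_ideal_span_monomial_image.1 hA A (by simp)
  exact ⟨a, b, Ideal.subset_span ⟨a, ha, rfl⟩, Ideal.subset_span ⟨b, hb, rfl⟩, hle⟩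

end IsMonomialIdeal

lemma monomial_mem_intCl_iff (hI : IsMonomialIdeal I) {B : Fin n →₀ ℕ} :
    monomial B (1 : k) ∈ intCl I ↔ ∃ m, 0 < m ∧ monomial (m • B) (1 : k) ∈ I ^ m := by
  simp only [intCl, Set.mem_ofPred_eq, monomial_pow, one_pow]
  constructor
  · rintro ⟨r, -, a, ha, heq⟩
    -- comparing coefficients of `x^{rB}`, some `aₘ ∈ Iᵐ` has `x^{mB}` in its support
    have hcoeff : ∑ i ∈ Finset.Icc 1 r, coeff (r • B) (a i * monomial ((r - i) • B) 1) = -1 := by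
      have := congrArg (coeff (r • B)) heq
      rw [coeff_add, coeff_monomial, if_pos rfl, coeff_zero, coeff_sum] at this
      linear_combination this
    obtain ⟨m, hm, hne⟩ := Finset.exists_ne_zero_of_sum_ne_zero (by rw [hcoeff]; norm_num)
    rw [Finset.mem_Icc] at hm
    rw [show r • B = m • B + (r - m) • B by rw [← add_nsmul, Nat.add_sub_cancel' hm.2],
      coeff_mul_monomial, mul_one] at hne
    exact ⟨m, hm.1,
      (hI.pow m).monomial_mem_of_mem_support (ha m hm.1 hm.2) (MvPolynomial.mem_support_iff.2 hne)⟩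
  · rintro ⟨m, hm, hmem⟩
    refine ⟨m, hm, fun j => if j = m then -monomial (m • B) 1 else 0, fun j _ _ => ?_, ?_⟩
    · dsimp only
      split_ifs with hj
      · subst hj
        exact neg_mem hmem
      · exact zero_mem _
    · rw [Finset.sum_eq_single_of_mem m (Finset.mem_Icc.2 ⟨hm, le_rfl⟩)]
      · simp
      · intro j _ hj
        simp [hj]

namespace IsStableSet

lemma top : IsStableSet ((⊤ : Ideal (MvPolynomial (Fin n) k)) : Set (MvPolynomial (Fin n) k)) :=
  fun _ _ _ _ _ _ _ => Submodule.mem_top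

lemma monomial_exchange_mem_mul (hI : IsStableSet (I : Set (MvPolynomial (Fin n) k)))
    {a b A : Fin n →₀ ℕ} (ha : monomial a (1 : k) ∈ I) (hb : monomial b (1 : k) ∈ J)
    (hab : a + b ≤ A) {t : Fin n} (hat : a t ≠ 0) (hA : ∀ s, A s ≠ 0 → s ≤ t)
    {i : Fin n} (hi : i < t) :
    monomial (A + single i 1 - single t 1) (1 : k) ∈ I * J := by
  have haA : a ≤ A := le_trans le_self_add hab
  have ha' := hI a ha t hat (fun s hs => hA s (by have := haA s; omega)) i hi
  have hta : single t 1 ≤ a + single i 1 :=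
    le_trans (single_le_iff.2 (Nat.one_le_iff_ne_zero.2 hat)) le_self_add
  refine monomial_one_mem_of_le (monomial_one_add_mem_mul ha' hb) ?_
  calc a + single i 1 - single t 1 + b = a + b + single i 1 - single t 1 := by
        rw [tsub_add_eq_add_tsub hta, add_right_comm]
    _ ≤ A + single i 1 - single t 1 := by gcongr

lemma mul (hIst : IsStableSet (I : Set (MvPolynomial (Fin n) k)))
    (hJst : IsStableSet (J : Set (MvPolynomial (Fin n) k)))
    (hI : IsMonomialIdeal I) (hJ : IsMonomialIdeal J) :
    IsStableSet ((I * J : Ideal (MvPolynomial (Fin n) k)) : Set (MvPolynomial (Fin n) k)) := by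
  intro A hA t _ hmax i hi
  obtain ⟨a, b, ha, hb, hab⟩ := hI.exists_add_le_of_monomial_mem_mul hJ hA
  by_cases hlt : (a + b) t < A t
  · exact monomial_one_mem_of_le (monomial_one_add_mem_mul ha hb)
      (le_add_single_tsub_single hab hlt i)
  · obtain hat | hbt : a t ≠ 0 ∨ b t ≠ 0 := by
      have := hab t
      simp only [Finsupp.add_apply] at this hlt
      omega
    · exact hIst.monomial_exchange_mem_mul ha hb hab hat hmax hi
    · rw [mul_comm]
      exact hJst.monomial_exchange_mem_mul hb ha (add_comm a b ▸ hab) hbt hmax hi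

lemma pow (hst : IsStableSet (I : Set (MvPolynomial (Fin n) k))) (hI : IsMonomialIdeal I)
    (m : ℕ) :
    IsStableSet ((I ^ m : Ideal (MvPolynomial (Fin n) k)) : Set (MvPolynomial (Fin n) k)) := by
  induction m with
  | zero => rw [pow_zero, Ideal.one_eq_top]; exact top
  | succ m ih => rw [pow_succ]; exact ih.mul hst (hI.pow m) hI

lemma monomial_add_single_mem {T : Set (MvPolynomial (Fin n) k)} (hT : IsStableSet T)
    {t i : Fin n} (hi : i < t) (j : ℕ) {A : Fin n →₀ ℕ} (hA : ∀ s, A s ≠ 0 → s ≤ t)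
    (h : monomial (A + single t j) (1 : k) ∈ T) : monomial (A + single i j) (1 : k) ∈ T := by
  induction j generalizing A with
  | zero => simpa using h
  | succ j ih =>
    have hex := hT _ h t (by simp) (le_of_add_single_apply_ne_zero hA le_rfl _) i hi
    rw [show A + single t (j + 1) + single i 1 = A + single i 1 + single t j + single t 1 by
      rw [single_add]; abel, add_tsub_cancel_right] at hex
    simpa only [add_assoc, ← single_add, add_comm 1 j] using
      ih (le_of_add_single_apply_ne_zero hA hi.le 1) hex

end IsStableSet

end

/-- Let `I` be a stable monomial ideal, `x^B` a monomial in the integral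
closure `Ī`, `t = m(x^B)` the largest index of a variable dividing `x^B`, and `i < t`.
Then `x_i · x^B / x_t ∈ Ī`. -/
theorem intCl_stable_exchange (I : Ideal (MvPolynomial (Fin n) k))
    (hI : IsMonomialIdeal I) (hst : IsStableSet (I : Set (MvPolynomial (Fin n) k)))
    (B : Fin n →₀ ℕ) (hB : monomial B (1 : k) ∈ intCl I)
    (t : Fin n) (ht : B t ≠ 0) (htmax : ∀ s, B s ≠ 0 → s ≤ t)
    (i : Fin n) (hi : i < t) :
    monomial (B + Finsupp.single i 1 - Finsupp.single t 1) (1 : k) ∈ intCl I := by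
  obtain ⟨m, hm, hmB⟩ := (monomial_mem_intCl_iff hI).1 hB
  obtain ⟨C, rfl⟩ : ∃ C, B = C + single t 1 :=
    ⟨B - single t 1, (tsub_add_cancel_of_le (single_le_iff.2 (Nat.one_le_iff_ne_zero.2 ht))).symm⟩
  have hC : ∀ s, (m • C) s ≠ 0 → s ≤ t := fun s hs => htmax s (by simp_all)
  rw [add_right_comm, add_tsub_cancel_right]
  refine (monomial_mem_intCl_iff hI).2 ⟨m, hm, ?_⟩
  rw [nsmul_add, smul_single, smul_eq_mul, mul_one] at hmB ⊢
  exact (hst.pow hI m).monomial_add_single_mem hi m hC hmB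
end
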